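/- Let G be a nilpotent group of class at most n+1 (n ≥ 1) and x, g ∈ G. For integers a₁,…,a_{n+1}, and any j ∈ {1,…,n+1}, the element [x^{a_j}, g^{a_1},…, g^{a_{j-1}}, g^{a_{j+1}},…, g^{a_{n+1}}] equals [x, g, g, …, g]^{a₁a₂⋯a_{n+1}} (g repeated n times); in particular it is independent of j (Protocol II correctness). -/

import Mathlib

/-- The commutator `[a,b] = a⁻¹b⁻¹ab`. -/
def gcomm {G : Type*} [Group G] (a b : G) : G := a⁻¹ * b⁻¹ * a * b

/-- Conjugation `g^h = h⁻¹gh`. -/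
def gconj {G : Type*} [Group G] (g h : G) : G := h⁻¹ * g * h

/-- Left-normed commutator `[x, l₁, l₂, …]`. -/
def commList {G : Type*} [Group G] (x : G) (l : List G) : G := l.foldl gcomm x

/-- Left-normed commutator of a list: `[g₁, …, g_k]` (equal to `1` for the empty list). -/
def listComm {G : Type*} [Group G] : List G → G
  | [] => 1
  | x :: xs => commList x xs

/-!
Modulo `γ_{k+2}`, the commutator `[x, g]` of an element `x ∈ γ_k` is central, so
`[x^a, g^b] ≡ [x, g]^{ab}`. Peeling off one entry at a time, the error term lands in
`γ_{k+2}` and, after the remaining `m - 1` commutations, in `γ_{k+m+1} = 1`; hence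
`[x^a, g^{b₁}, …, g^{b_m}] = [x, g, …, g]^{a b₁ ⋯ b_m}` once `k + m ≥ n`. The theorem is the
case `k = 0`, where the exponent `a_j · ∏_{i ≠ j} a_i` is `∏ a_i` whatever `j` is. Indices follow
Mathlib's `lowerCentralSeries ⊤ k`, so `γ_0 = G`.
-/

section

open scoped commutatorElement

variable {G : Type*} [Group G]

lemma gcomm_eq_commutatorElement (a b : G) : gcomm a b = ⁅a⁻¹, b⁻¹⁆ := by
  simp [gcomm, commutatorElement_def]

lemma gcomm_inv (a b : G) : (gcomm a b)⁻¹ = gcomm b a := by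
  simp only [gcomm]; group

lemma gcomm_eq_one_iff {a b : G} : gcomm a b = 1 ↔ Commute a b := by
  rw [gcomm_eq_commutatorElement, commutatorElement_eq_one_iff_commute, Commute.inv_inv_iff]

lemma map_gcomm {H : Type*} [Group H] (f : G →* H) (a b : G) :
    f (gcomm a b) = gcomm (f a) (f b) := by
  simp [gcomm]

lemma commList_cons (x w : G) (l : List G) :
    commList x (w :: l) = commList (gcomm x w) l := rfl

lemma gcomm_mul_left (u e w : G) :
    gcomm (u * e) w = gcomm u w * (gcomm (gcomm u w) e * gcomm e w) := by
  simp only [gcomm]; group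

lemma gcomm_mem_lowerCentralSeries_succ {t : ℕ} {a : G}
    (ha : a ∈ (⊤ : Subgroup G).lowerCentralSeries t) (y : G) :
    gcomm a y ∈ (⊤ : Subgroup G).lowerCentralSeries (t + 1) := by
  rw [gcomm_eq_commutatorElement]
  exact Subgroup.commutator_mem_commutator (inv_mem ha) (Subgroup.mem_top _)

lemma gcomm_mem_lowerCentralSeries_succ' {t : ℕ} {a : G}
    (ha : a ∈ (⊤ : Subgroup G).lowerCentralSeries t) (y : G) :
    gcomm y a ∈ (⊤ : Subgroup G).lowerCentralSeries (t + 1) := by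
  rw [← gcomm_inv]
  exact inv_mem (gcomm_mem_lowerCentralSeries_succ ha y)

lemma exists_commList_mul_eq_mul (l : List G) {t : ℕ} (u : G) {e : G}
    (he : e ∈ (⊤ : Subgroup G).lowerCentralSeries t) :
    ∃ e' ∈ (⊤ : Subgroup G).lowerCentralSeries (t + l.length),
      commList (u * e) l = commList u l * e' := by
  induction l generalizing t u e with
  | nil => exact ⟨e, he, rfl⟩
  | cons w l ih =>
    obtain ⟨e', he', hcomm⟩ := ih (gcomm u w)
      (mul_mem (gcomm_mem_lowerCentralSeries_succ' he _) (gcomm_mem_lowerCentralSeries_succ he w))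
    refine ⟨e', by simpa [Nat.add_assoc, Nat.add_comm 1] using he', ?_⟩
    rw [commList_cons, gcomm_mul_left, hcomm, commList_cons]

lemma commList_mul_eq_of_lowerCentralSeries_eq_bot {n t : ℕ}
    (h : (⊤ : Subgroup G).lowerCentralSeries (n + 1) = ⊥) (l : List G) (hl : n < t + l.length)
    (u : G) {e : G} (he : e ∈ (⊤ : Subgroup G).lowerCentralSeries t) :
    commList (u * e) l = commList u l := by
  obtain ⟨e', he', hcomm⟩ := exists_commList_mul_eq_mul l u he
  have : e' ∈ (⊤ : Subgroup G).lowerCentralSeries (n + 1) :=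
    Subgroup.lowerCentralSeries_antitone _ hl he'
  rw [h, Subgroup.mem_bot] at this
  rw [hcomm, this, mul_one]

lemma gcomm_zpow_left_of_commute {x g : G} (hx : Commute (gcomm x g) x) (a : ℤ) :
    gcomm (x ^ a) g = gcomm x g ^ a := by
  have hsemi : SemiconjBy g (x * gcomm x g) x := by
    simp only [SemiconjBy, gcomm]; group
  have key := hsemi.zpow_right a
  rw [hx.symm.mul_zpow] at key
  calc gcomm (x ^ a) g = (x ^ a)⁻¹ * (g⁻¹ * (g * (x ^ a * gcomm x g ^ a))) := by
        rw [key]; simp only [gcomm]; group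
    _ = gcomm x g ^ a := by group

lemma gcomm_zpow_zpow_of_commute {x g : G} (hx : Commute (gcomm x g) x)
    (hg : Commute (gcomm x g) g) (a b : ℤ) :
    gcomm (x ^ a) (g ^ b) = gcomm x g ^ (a * b) := by
  have hxa := gcomm_zpow_left_of_commute hx a
  have hga : gcomm g (x ^ a) = gcomm x g ^ (-a) := by
    rw [← gcomm_inv, hxa, zpow_neg]
  rw [← gcomm_inv, gcomm_zpow_left_of_commute (hga ▸ hg.zpow_left (-a)) b, hga, ← zpow_mul,
    ← zpow_neg, neg_mul, neg_neg]

lemma exists_gcomm_zpow_zpow_eq_mul {k : ℕ} {x : G}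
    (hx : x ∈ (⊤ : Subgroup G).lowerCentralSeries k) (g : G) (a b : ℤ) :
    ∃ e ∈ (⊤ : Subgroup G).lowerCentralSeries (k + 2),
      gcomm (x ^ a) (g ^ b) = gcomm x g ^ (a * b) * e := by
  set N := (⊤ : Subgroup G).lowerCentralSeries (k + 2)
  let π : G →* G ⧸ N := QuotientGroup.mk' N
  have central (y : G) : Commute (gcomm (π x) (π g)) (π y) := by
    rw [← map_gcomm, ← gcomm_eq_one_iff, ← map_gcomm, ← MonoidHom.mem_ker, QuotientGroup.ker_mk']
    exact gcomm_mem_lowerCentralSeries_succ (gcomm_mem_lowerCentralSeries_succ hx g) y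
  have hq : π (gcomm (x ^ a) (g ^ b)) = π (gcomm x g ^ (a * b)) := by
    simp only [map_gcomm, map_zpow]
    exact gcomm_zpow_zpow_of_commute (central x) (central g) a b
  refine ⟨(gcomm x g ^ (a * b))⁻¹ * gcomm (x ^ a) (g ^ b), ?_, by group⟩
  rw [← QuotientGroup.ker_mk' N, MonoidHom.mem_ker, map_mul, map_inv, hq, inv_mul_cancel]

lemma commList_zpow_ofFn_zpow {n : ℕ} (h : (⊤ : Subgroup G).lowerCentralSeries (n + 1) = ⊥)
    (g : G) (m : ℕ) {k : ℕ} (hkm : n ≤ k + m) {x : G}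
    (hx : x ∈ (⊤ : Subgroup G).lowerCentralSeries k) (a : ℤ) (b : Fin m → ℤ) :
    commList (x ^ a) (List.ofFn fun i => g ^ b i)
      = commList x (List.replicate m g) ^ (a * ∏ i, b i) := by
  induction m generalizing k x a with
  | zero => simp [commList]
  | succ m ih =>
    obtain ⟨e, he, hstep⟩ := exists_gcomm_zpow_zpow_eq_mul hx g a (b 0)
    rw [List.ofFn_succ, commList_cons, hstep,
      commList_mul_eq_of_lowerCentralSeries_eq_bot h _ (by rw [List.length_ofFn]; omega) _ he,
      ih (by omega) (gcomm_mem_lowerCentralSeries_succ hx g), Fin.prod_univ_succ, mul_assoc,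
      List.replicate_succ, commList_cons]

end

theorem stmt15_general {G : Type*} [Group G] (n : ℕ)
    (h : Subgroup.lowerCentralSeries (⊤ : Subgroup G) (n + 1) = ⊥)
    (x g : G) (a : Fin (n + 1) → ℤ) (j : Fin (n + 1)) :
    commList (x ^ a j) (List.ofFn (fun i : Fin n => g ^ a (j.succAbove i)))
      = (commList x (List.replicate n g)) ^ (∏ i, a i) := by
  rw [commList_zpow_ofFn_zpow h g n (k := 0) (Nat.le_add_left n 0) (Subgroup.mem_top x) (a j),
    ← Fin.prod_univ_succAbove a j]

theorem stmt15 {G : Type*} [Group G] (n : ℕ) (hn : 1 ≤ n)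
    (h : Subgroup.lowerCentralSeries (⊤ : Subgroup G) (n + 1) = ⊥)
    (x g : G) (a : Fin (n + 1) → ℤ) (j : Fin (n + 1)) :
    commList (x ^ a j) (List.ofFn (fun i : Fin n => g ^ a (j.succAbove i)))
      = (commList x (List.replicate n g)) ^ (∏ i, a i) :=
  stmt15_general n h x g a j
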